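/- arXiv:math/0702279 — 2 statements merged into one kernel-verified Lean document; each statement's English description precedes it below -/
import Mathlib

section
/- Let f : ℤ → ℕ ∪ {∞} be a function such that f⁻¹(0) is a finite set, and let d₀ be a positive integer such that f(n) ≥ 1 for all integers n with |n| ≥ d₀. Let U = {u_k}_{k=1}^∞ be a sequence of integers such that f(n) = card{k ≥ 1 : u_k = n} for every integer n. Let A be a finite set of integers with r_A(n) ≤ f(n) for all integers n, with 0 ∉ A, and such that for some positive integer m, r_A(n) ≥ card{i ≤ m : u_i = n} for all integers n. Then there exists a finite set of integers B such that A ⊆ B, 0 ∉ B, r_B(n) ≤ f(n) for all integers n, and r_B(n) ≥ card{i ≤ m+1 : u_i = n} for all integers n. -/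
/-- The representation function of a set `A` of integers:
`r_A(n) = card {(a,b) : a, b ∈ A, a ≤ b, a + b = n}`, valued in `ℕ∞`. -/
noncomputable def repFn (A : Set ℤ) (n : ℤ) : ℕ∞ :=
  {p : ℤ × ℤ | p.1 ∈ A ∧ p.2 ∈ A ∧ p.1 ≤ p.2 ∧ p.1 + p.2 = n}.encard

/-- The counting function of a set `A` of integers:
`A(y, x) = card {a ∈ A : y ≤ a ≤ x}`. -/
noncomputable def countFn (A : Set ℤ) (y x : ℝ) : ℕ :=
  {a : ℤ | a ∈ A ∧ y ≤ (a : ℝ) ∧ (a : ℝ) ≤ x}.ncard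

/-!
Only `n₀ = u (m + 1)` can lack a representation at step `m + 1`. If it does, adjoin the two
far-away integers `-c` and `n₀ + c`, with `c > 4M`, where `A ⊆ [-M, M]` and `|n₀| ≤ M`. In the
enlarged set a pair with sum outside `[-2M, 2M]` is determined by its sum, and the sums in
`[-2M, 2M]` are represented exactly as in `A`, apart from the new pair `(-c, n₀ + c)`. So `r(n₀)`
grows by one, which `f(n₀)` allows because it counts all occurrences of `n₀` in `u`, and every
other `n` either keeps `r(n)` or has `r(n) ≤ 1` and `|n| > 2M ≥ d₀`, whence `1 ≤ f(n)`.
-/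

def repPairs (A : Set ℤ) (n : ℤ) : Set (ℤ × ℤ) :=
  {p | p.1 ∈ A ∧ p.2 ∈ A ∧ p.1 ≤ p.2 ∧ p.1 + p.2 = n}

lemma repFn_eq_encard_repPairs (A : Set ℤ) (n : ℤ) : repFn A n = (repPairs A n).encard := rfl

lemma repPairs_mono {A B : Set ℤ} (h : A ⊆ B) (n : ℤ) : repPairs A n ⊆ repPairs B n :=
  fun _ ⟨h₁, h₂, hle, hsum⟩ => ⟨h h₁, h h₂, hle, hsum⟩

lemma repFn_mono {A B : Set ℤ} (h : A ⊆ B) (n : ℤ) : repFn A n ≤ repFn B n :=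
  Set.encard_mono (repPairs_mono h n)

section Occurrences

variable (u : ℕ → ℤ) (m : ℕ) (n : ℤ)

lemma encard_occurrences_succ_of_ne (hn : u (m + 1) ≠ n) :
    {i : ℕ | 1 ≤ i ∧ i ≤ m + 1 ∧ u i = n}.encard = {i : ℕ | 1 ≤ i ∧ i ≤ m ∧ u i = n}.encard := by
  congr 1
  ext i
  refine ⟨fun ⟨h₁, h₂, h₃⟩ => ⟨h₁, ?_, h₃⟩, fun ⟨h₁, h₂, h₃⟩ => ⟨h₁, by omega, h₃⟩⟩
  rcases Nat.lt_or_eq_of_le h₂ with h | rfl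
  · omega
  · exact absurd h₃ hn

lemma encard_occurrences_succ_le :
    {i : ℕ | 1 ≤ i ∧ i ≤ m + 1 ∧ u i = n}.encard ≤
      {i : ℕ | 1 ≤ i ∧ i ≤ m ∧ u i = n}.encard + 1 := by
  refine (Set.encard_mono ?_).trans (Set.encard_insert_le _ (m + 1))
  rintro i ⟨h₁, h₂, h₃⟩
  rcases Nat.lt_or_eq_of_le h₂ with h | rfl
  · exact Or.inr ⟨h₁, by omega, h₃⟩
  · exact Or.inl rfl

end Occurrences

section AdjoinPair

def adjoinPair (A : Set ℤ) (n₀ c : ℤ) : Set ℤ := insert (-c) (insert (n₀ + c) A)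

lemma subset_adjoinPair (A : Set ℤ) (n₀ c : ℤ) : A ⊆ adjoinPair A n₀ c :=
  (Set.subset_insert _ _).trans (Set.subset_insert _ _)

variable {A : Set ℤ} {M n₀ c : ℤ}

lemma mem_of_mem_adjoinPair {x : ℤ} (hx : x ∈ adjoinPair A n₀ c) (h₁ : x ≠ -c)
    (h₂ : x ≠ n₀ + c) : x ∈ A :=
  (hx.resolve_left h₁).resolve_left h₂

lemma bounds_of_mem_adjoinPair (hA : ∀ a ∈ A, |a| ≤ M) {x : ℤ} (hx : x ∈ adjoinPair A n₀ c) :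
    x = -c ∨ x = n₀ + c ∨ (-M ≤ x ∧ x ≤ M) := by
  rcases hx with rfl | rfl | hx
  · exact Or.inl rfl
  · exact Or.inr (Or.inl rfl)
  · exact Or.inr (Or.inr (abs_le.mp (hA x hx)))

lemma repPairs_adjoinPair_self (hA : ∀ a ∈ A, |a| ≤ M) (hn₀ : |n₀| ≤ M) (hc : 4 * M < c) :
    repPairs (adjoinPair A n₀ c) n₀ = insert (-c, n₀ + c) (repPairs A n₀) := by
  rw [abs_le] at hn₀
  ext ⟨p, q⟩
  constructor
  · rintro ⟨hp, hq, hle, hsum⟩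
    have := bounds_of_mem_adjoinPair hA hp
    have := bounds_of_mem_adjoinPair hA hq
    have : (p = -c ∧ q = n₀ + c) ∨ (p ≠ -c ∧ p ≠ n₀ + c ∧ q ≠ -c ∧ q ≠ n₀ + c) := by omega
    rcases this with ⟨rfl, rfl⟩ | ⟨hp₁, hp₂, hq₁, hq₂⟩
    · exact Or.inl rfl
    · exact Or.inr ⟨mem_of_mem_adjoinPair hp hp₁ hp₂, mem_of_mem_adjoinPair hq hq₁ hq₂, hle, hsum⟩
  · rintro (h | h)
    · obtain ⟨rfl, rfl⟩ := Prod.mk.inj h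
      exact ⟨Or.inl rfl, Or.inr (Or.inl rfl), by omega, by omega⟩
    · exact repPairs_mono (subset_adjoinPair A n₀ c) n₀ h

lemma repPairs_adjoinPair_of_abs_le (hA : ∀ a ∈ A, |a| ≤ M) (hn₀ : |n₀| ≤ M) (hc : 4 * M < c)
    {n : ℤ} (hn : |n| ≤ 2 * M) (hne : n ≠ n₀) :
    repPairs (adjoinPair A n₀ c) n = repPairs A n := by
  rw [abs_le] at hn₀ hn
  refine (Set.Subset.antisymm (fun ⟨p, q⟩ ⟨hp, hq, hle, hsum⟩ => ?_)
    (repPairs_mono (subset_adjoinPair A n₀ c) n))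
  have := bounds_of_mem_adjoinPair hA hp
  have := bounds_of_mem_adjoinPair hA hq
  exact ⟨mem_of_mem_adjoinPair hp (by omega) (by omega),
    mem_of_mem_adjoinPair hq (by omega) (by omega), hle, hsum⟩

lemma encard_repPairs_adjoinPair_le_one (hA : ∀ a ∈ A, |a| ≤ M) (hn₀ : |n₀| ≤ M)
    (hc : 4 * M < c) {n : ℤ} (hn : 2 * M < |n|) :
    (repPairs (adjoinPair A n₀ c) n).encard ≤ 1 := by
  rw [abs_le] at hn₀
  rw [lt_abs] at hn
  rw [Set.encard_le_one_iff]
  rintro ⟨p, q⟩ ⟨p', q'⟩ ⟨hp, hq, hle, hsum⟩ ⟨hp', hq', hle', hsum'⟩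
  have := bounds_of_mem_adjoinPair hA hp
  have := bounds_of_mem_adjoinPair hA hq
  have := bounds_of_mem_adjoinPair hA hp'
  have := bounds_of_mem_adjoinPair hA hq'
  simp only [Prod.mk.injEq]
  omega

end AdjoinPair

theorem exists_superset_repFn_eq_add_one {A : Set ℤ} (hA : A.Finite) (hA0 : (0 : ℤ) ∉ A)
    (n₀ d : ℤ) :
    ∃ B : Set ℤ, B.Finite ∧ A ⊆ B ∧ (0 : ℤ) ∉ B ∧ repFn B n₀ = repFn A n₀ + 1 ∧
      ∀ n ≠ n₀, repFn B n = repFn A n ∨ (repFn B n ≤ 1 ∧ d ≤ |n|) := by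
  obtain ⟨M₁, hM₁⟩ := (hA.image abs).bddAbove
  set M := max M₁ (max |n₀| d)
  have hAM : ∀ a ∈ A, |a| ≤ M := fun a ha => le_max_of_le_left (hM₁ (Set.mem_image_of_mem _ ha))
  have hn₀M : |n₀| ≤ M := le_max_of_le_right (le_max_left _ _)
  have hdM : d ≤ M := le_max_of_le_right (le_max_right _ _)
  have hc : 4 * M < 4 * M + 1 := by omega
  have hn₀M' := abs_le.mp hn₀M
  refine ⟨adjoinPair A n₀ (4 * M + 1), (hA.insert _).insert _, subset_adjoinPair A n₀ _,
    ?_, ?_, fun n hne => ?_⟩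
  · rintro (h | h | h)
    · omega
    · omega
    · exact hA0 h
  · have hnew : (-(4 * M + 1), n₀ + (4 * M + 1)) ∉ repPairs A n₀ := fun ⟨h, _⟩ => by
      have := abs_le.mp (hAM _ h)
      omega
    rw [repFn_eq_encard_repPairs, repPairs_adjoinPair_self hAM hn₀M hc,
      Set.encard_insert_of_notMem hnew, repFn_eq_encard_repPairs]
  · rcases le_or_gt |n| (2 * M) with hn | hn
    · left
      rw [repFn_eq_encard_repPairs, repPairs_adjoinPair_of_abs_le hAM hn₀M hc hn hne,
        repFn_eq_encard_repPairs]
    · exact Or.inr ⟨encard_repPairs_adjoinPair_le_one hAM hn₀M hc hn, by omega⟩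

theorem stmt_1_general (f : ℤ → ℕ∞)
    (d₀ : ℕ) (hd : ∀ n : ℤ, (d₀ : ℤ) ≤ |n| → 1 ≤ f n)
    (u : ℕ → ℤ) (hu : ∀ n : ℤ, f n = {k : ℕ | 1 ≤ k ∧ u k = n}.encard)
    (A : Set ℤ) (hA : A.Finite) (hA0 : (0 : ℤ) ∉ A)
    (hAf : ∀ n : ℤ, repFn A n ≤ f n)
    (m : ℕ)
    (hAm : ∀ n : ℤ, {i : ℕ | 1 ≤ i ∧ i ≤ m ∧ u i = n}.encard ≤ repFn A n) :
    ∃ B : Set ℤ, B.Finite ∧ A ⊆ B ∧ (0 : ℤ) ∉ B ∧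
      (∀ n : ℤ, repFn B n ≤ f n) ∧
      (∀ n : ℤ, {i : ℕ | 1 ≤ i ∧ i ≤ m + 1 ∧ u i = n}.encard ≤ repFn B n) := by
  set n₀ := u (m + 1)
  have hf : ∀ n, {i : ℕ | 1 ≤ i ∧ i ≤ m + 1 ∧ u i = n}.encard ≤ f n := fun n =>
    (hu n).symm ▸ Set.encard_mono fun i ⟨h₁, _, h₃⟩ => ⟨h₁, h₃⟩
  have hAm' : ∀ n ≠ n₀, {i : ℕ | 1 ≤ i ∧ i ≤ m + 1 ∧ u i = n}.encard ≤ repFn A n := fun n hn =>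
    (encard_occurrences_succ_of_ne u m n hn.symm).trans_le (hAm n)
  by_cases hAn₀ : {i : ℕ | 1 ≤ i ∧ i ≤ m + 1 ∧ u i = n₀}.encard ≤ repFn A n₀
  · refine ⟨A, hA, subset_rfl, hA0, hAf, fun n => ?_⟩
    rcases eq_or_ne n n₀ with rfl | hn
    exacts [hAn₀, hAm' n hn]
  obtain ⟨B, hB, hAB, hB0, hBn₀, hBn⟩ := exists_superset_repFn_eq_add_one hA hA0 n₀ d₀
  refine ⟨B, hB, hAB, hB0, fun n => ?_, fun n => ?_⟩
  · rcases eq_or_ne n n₀ with rfl | hn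
    · have hlt := (not_le.mp hAn₀).trans_le (hf _)
      exact hBn₀ ▸ (ENat.add_one_le_iff hlt.ne_top).mpr hlt
    · rcases hBn n hn with h | ⟨h₁, h₂⟩
      exacts [h ▸ hAf n, h₁.trans (hd n h₂)]
  · rcases eq_or_ne n n₀ with rfl | hn
    · exact hBn₀ ▸ (encard_occurrences_succ_le u m _).trans (add_le_add_left (hAm _) 1)
    · exact (hAm' n hn).trans (repFn_mono hAB n)

theorem stmt_1 (f : ℤ → ℕ∞) (hf : {n : ℤ | f n = 0}.Finite)
    (d₀ : ℕ) (hd₀ : 0 < d₀) (hd : ∀ n : ℤ, (d₀ : ℤ) ≤ |n| → 1 ≤ f n)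
    (u : ℕ → ℤ) (hu : ∀ n : ℤ, f n = {k : ℕ | 1 ≤ k ∧ u k = n}.encard)
    (A : Set ℤ) (hA : A.Finite) (hA0 : (0 : ℤ) ∉ A)
    (hAf : ∀ n : ℤ, repFn A n ≤ f n)
    (m : ℕ) (hm : 0 < m)
    (hAm : ∀ n : ℤ, {i : ℕ | 1 ≤ i ∧ i ≤ m ∧ u i = n}.encard ≤ repFn A n) :
    ∃ B : Set ℤ, B.Finite ∧ A ⊆ B ∧ (0 : ℤ) ∉ B ∧
      (∀ n : ℤ, repFn B n ≤ f n) ∧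
      (∀ n : ℤ, {i : ℕ | 1 ≤ i ∧ i ≤ m + 1 ∧ u i = n}.encard ≤ repFn B n) :=
  stmt_1_general f d₀ hd u hu A hA hA0 hAf m hAm
end

section
/- For any ε > 0, there exists a unique representation basis A for the integers (i.e., a set A of integers with r_A(n) = 1 for all integers n) such that A(-x, x) ≥ x^{1/2 - ε} for infinitely many positive integers x. -/
def IsSidon (A : Set ℤ) : Prop :=
  ∀ a ∈ A, ∀ b ∈ A, ∀ c ∈ A, ∀ d ∈ A, a + b = c + d → (a = c ∧ b = d) ∨ (a = d ∧ b = c)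

def etf (p : ℕ) (i : ℕ) : ℤ := 2 * p * i + ((i : ℤ) ^ 2 % p)

lemma etf_nonneg (p i : ℕ) (hp : 0 < p) : 0 ≤ etf p i := by
  have := Int.emod_nonneg ((i:ℤ)^2) (by exact_mod_cast hp.ne' : (p:ℤ) ≠ 0)
  unfold etf; positivity

lemma etf_lt (p i : ℕ) (hp : 0 < p) (hi : i < p) : etf p i < 2 * p * p := by
  have h1 : (i:ℤ)^2 % p < p := Int.emod_lt_of_pos _ (by exact_mod_cast hp)
  have : (i:ℤ) + 1 ≤ p := by exact_mod_cast hi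
  have hp' : (0:ℤ) < p := by exact_mod_cast hp
  unfold etf; nlinarith

lemma etf_strictMono (p : ℕ) (hp : 0 < p) {i j : ℕ} (hij : i < j) : etf p i < etf p j := by
  have h1 : (i:ℤ)^2 % p < p := Int.emod_lt_of_pos _ (by exact_mod_cast hp)
  have h2 : 0 ≤ (j:ℤ)^2 % p := Int.emod_nonneg _ (by exact_mod_cast hp.ne' : (p:ℤ) ≠ 0)
  have : (i:ℤ) + 1 ≤ j := by exact_mod_cast hij
  have hp' : (0:ℤ) < p := by exact_mod_cast hp
  unfold etf; nlinarith

lemma etf_sidon {p : ℕ} (hp : p.Prime) (hodd : p ≠ 2) {i j k l : ℕ}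
    (hi : i < p) (hj : j < p) (hk : k < p) (hl : l < p)
    (h : etf p i + etf p j = etf p k + etf p l) :
    (i = k ∧ j = l) ∨ (i = l ∧ j = k) := by
  have hp0 : (0:ℤ) < p := by exact_mod_cast hp.pos
  have hnn : ∀ m : ℕ, 0 ≤ (m:ℤ)^2 % p ∧ (m:ℤ)^2 % p < p := fun m =>
    ⟨Int.emod_nonneg _ hp0.ne', Int.emod_lt_of_pos _ hp0⟩
  obtain ⟨hri0, hri1⟩ := hnn i
  obtain ⟨hrj0, hrj1⟩ := hnn j
  obtain ⟨hrk0, hrk1⟩ := hnn k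
  obtain ⟨hrl0, hrl1⟩ := hnn l
  have heq : 2*(p:ℤ)*((i:ℤ)+j-(k:ℤ)-l) =
      ((k:ℤ)^2 % p + (l:ℤ)^2 % p) - ((i:ℤ)^2 % p + (j:ℤ)^2 % p) := by
    unfold etf at h; push_cast at h ⊢; linarith
  have hzero : ((k:ℤ)^2 % p + (l:ℤ)^2 % p) - ((i:ℤ)^2 % p + (j:ℤ)^2 % p) = 0 := by
    apply Int.eq_zero_of_abs_lt_dvd ⟨(i:ℤ)+j-(k:ℤ)-l, heq.symm⟩
    rw [abs_lt]; constructor <;> linarith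
  have hsum : (i:ℤ) + j = (k:ℤ) + l := by
    have h2 := heq.trans hzero
    have h2p : (2*(p:ℤ)) ≠ 0 := by positivity
    have := (mul_eq_zero.mp h2).resolve_left h2p
    linarith
  -- residues equal
  have hres : (i:ℤ)^2 % p + (j:ℤ)^2 % p = (k:ℤ)^2 % p + (l:ℤ)^2 % p := by linarith
  have hmod : ((i:ℤ)^2 + (j:ℤ)^2) % p = ((k:ℤ)^2 + (l:ℤ)^2) % p := by
    rw [Int.add_emod, Int.add_emod ((k:ℤ)^2), hres]
  have hdvd : (p:ℤ) ∣ ((i:ℤ)^2 + (j:ℤ)^2) - ((k:ℤ)^2 + (l:ℤ)^2) := Int.ModEq.dvd hmod.symm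
  have hfac : ((i:ℤ)^2 + (j:ℤ)^2) - ((k:ℤ)^2 + (l:ℤ)^2) = 2 * ((k:ℤ)*l - (i:ℤ)*j) := by
    linear_combination ((i:ℤ)+j+k+l) * hsum
  have hpi : Prime ((p:ℤ)) := Nat.prime_iff_prime_int.mp hp
  have hdvd2 : (p:ℤ) ∣ ((k:ℤ)*l - (i:ℤ)*j) := by
    rw [hfac] at hdvd
    rcases hpi.dvd_mul.mp hdvd with h2 | h2
    · exfalso
      have h3 : p ∣ 2 := by exact_mod_cast h2
      exact hodd ((Nat.prime_dvd_prime_iff_eq hp Nat.prime_two).mp h3)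
    · exact h2
  have hfac2 : ((i:ℤ) - k) * ((i:ℤ) - l) = (k:ℤ)*l - (i:ℤ)*j := by
    linear_combination (i:ℤ) * hsum
  have hdvd3 : (p:ℤ) ∣ ((i:ℤ) - k) * ((i:ℤ) - l) := hfac2 ▸ hdvd2
  rcases hpi.dvd_mul.mp hdvd3 with h2 | h2
  · have : (i:ℤ) - k = 0 := by
      apply Int.eq_zero_of_abs_lt_dvd h2
      rw [abs_lt]; constructor <;> [skip; skip] <;> push_cast <;> omega
    left
    constructor
    · omega
    · omega
  · have : (i:ℤ) - l = 0 := by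
      apply Int.eq_zero_of_abs_lt_dvd h2
      rw [abs_lt]; constructor <;> [skip; skip] <;> push_cast <;> omega
    right
    constructor
    · omega
    · omega


lemma union_sidon (F : Finset ℤ) (B d T sM : ℤ) (hB : ∀ a ∈ F, -B ≤ a ∧ a ≤ B)
    (hB0 : 0 ≤ B) (hd : d = 2*B+1) (hsM : 2 ≤ sM) (hT : T = 2*(d*sM + B + 1))
    (S : Finset ℤ) (hS : ∀ s ∈ S, 0 ≤ s ∧ s ≤ sM - 1) (hSsidon : IsSidon ↑S)
    (hF : IsSidon ↑F) :
    IsSidon ↑(F ∪ S.image (fun s => T + d * s)) := by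
  have hd0 : 0 < d := by omega
  have hprod : ∀ s ∈ S, 0 ≤ d * s ∧ d * s ≤ d * sM - d := by
    intro s hs
    obtain ⟨h1, h2⟩ := hS s hs
    constructor
    · positivity
    · nlinarith
  have hdsM : 2 * d ≤ d * sM := by nlinarith
  intro a ha b hb c hc e he heq
  have ha' : a ∈ F ∨ ∃ s ∈ S, T + d * s = a := by simpa using ha
  have hb' : b ∈ F ∨ ∃ s ∈ S, T + d * s = b := by simpa using hb
  have hc' : c ∈ F ∨ ∃ s ∈ S, T + d * s = c := by simpa using hc
  have he' : e ∈ F ∨ ∃ s ∈ S, T + d * s = e := by simpa using he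
  clear ha hb hc he
  -- helper for the (1,1) cases
  have key : ∀ u v : ℤ, u ∈ F → v ∈ F → ∀ s t : ℤ, s ∈ S → t ∈ S →
      u + (T + d * s) = v + (T + d * t) → u = v ∧ T + d * s = T + d * t := by
    intro u v hu hv s t hs ht h
    have hdvd : d ∣ (u - v) := ⟨t - s, by linear_combination h⟩
    obtain ⟨hu1, hu2⟩ := hB u hu
    obtain ⟨hv1, hv2⟩ := hB v hv
    have h0 : u - v = 0 := Int.eq_zero_of_abs_lt_dvd hdvd (by rw [abs_lt]; omega)
    have hst : d * s = d * t := by linarith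
    exact ⟨by omega, by omega⟩
  rcases ha' with ha | ⟨s1, hs1, rfl⟩
  · rcases hb' with hb | ⟨s2, hs2, rfl⟩
    · rcases hc' with hc | ⟨s3, hs3, rfl⟩
      · rcases he' with he | ⟨s4, hs4, rfl⟩
        · exact hF a ha b hb c hc e he heq
        · -- OO vs ON : contradiction
          exfalso
          obtain ⟨p1, p2⟩ := hB a ha; obtain ⟨q1, q2⟩ := hB b hb
          obtain ⟨r1, r2⟩ := hB c hc; obtain ⟨w1, w2⟩ := hprod s4 hs4
          linarith
      · rcases he' with he | ⟨s4, hs4, rfl⟩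
        · exfalso
          obtain ⟨p1, p2⟩ := hB a ha; obtain ⟨q1, q2⟩ := hB b hb
          obtain ⟨r1, r2⟩ := hB e he; obtain ⟨w1, w2⟩ := hprod s3 hs3
          linarith
        · exfalso
          obtain ⟨p1, p2⟩ := hB a ha; obtain ⟨q1, q2⟩ := hB b hb
          obtain ⟨w1, w2⟩ := hprod s3 hs3; obtain ⟨w3, w4⟩ := hprod s4 hs4
          linarith
    · rcases hc' with hc | ⟨s3, hs3, rfl⟩
      · rcases he' with he | ⟨s4, hs4, rfl⟩
        · exfalso
          obtain ⟨p1, p2⟩ := hB a ha; obtain ⟨q1, q2⟩ := hB c hc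
          obtain ⟨r1, r2⟩ := hB e he; obtain ⟨w1, w2⟩ := hprod s2 hs2
          linarith
        · -- a old, b new, c old, e new : (1,1) aligned
          obtain ⟨h1, h2⟩ := key a c ha hc s2 s4 hs2 hs4 heq
          exact Or.inl ⟨h1, h2⟩
      · rcases he' with he | ⟨s4, hs4, rfl⟩
        · -- a old, b new, c new, e old
          obtain ⟨h1, h2⟩ := key a e ha he s2 s3 hs2 hs3 (by linarith)
          exact Or.inr ⟨h1, h2⟩
        · -- a old, b new, c,e new : (1,2) contradiction
          exfalso
          obtain ⟨p1, p2⟩ := hB a ha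
          obtain ⟨w1, w2⟩ := hprod s2 hs2; obtain ⟨w3, w4⟩ := hprod s3 hs3
          obtain ⟨w5, w6⟩ := hprod s4 hs4
          linarith
  · rcases hb' with hb | ⟨s2, hs2, rfl⟩
    · rcases hc' with hc | ⟨s3, hs3, rfl⟩
      · rcases he' with he | ⟨s4, hs4, rfl⟩
        · exfalso
          obtain ⟨p1, p2⟩ := hB b hb; obtain ⟨q1, q2⟩ := hB c hc
          obtain ⟨r1, r2⟩ := hB e he; obtain ⟨w1, w2⟩ := hprod s1 hs1
          linarith
        · -- a new, b old, c old, e new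
          obtain ⟨h1, h2⟩ := key b c hb hc s1 s4 hs1 hs4 (by linarith)
          exact Or.inr ⟨h2, h1⟩
      · rcases he' with he | ⟨s4, hs4, rfl⟩
        · -- a new, b old, c new, e old
          obtain ⟨h1, h2⟩ := key b e hb he s1 s3 hs1 hs3 (by linarith)
          exact Or.inl ⟨h2, h1⟩
        · exfalso
          obtain ⟨p1, p2⟩ := hB b hb
          obtain ⟨w1, w2⟩ := hprod s1 hs1; obtain ⟨w3, w4⟩ := hprod s3 hs3
          obtain ⟨w5, w6⟩ := hprod s4 hs4
          linarith
    · rcases hc' with hc | ⟨s3, hs3, rfl⟩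
      · rcases he' with he | ⟨s4, hs4, rfl⟩
        · exfalso
          obtain ⟨p1, p2⟩ := hB c hc; obtain ⟨q1, q2⟩ := hB e he
          obtain ⟨w1, w2⟩ := hprod s1 hs1; obtain ⟨w3, w4⟩ := hprod s2 hs2
          linarith
        · exfalso
          obtain ⟨p1, p2⟩ := hB c hc
          obtain ⟨w1, w2⟩ := hprod s1 hs1; obtain ⟨w3, w4⟩ := hprod s2 hs2
          obtain ⟨w5, w6⟩ := hprod s4 hs4
          linarith
      · rcases he' with he | ⟨s4, hs4, rfl⟩
        · exfalso
          obtain ⟨p1, p2⟩ := hB e he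
          obtain ⟨w1, w2⟩ := hprod s1 hs1; obtain ⟨w3, w4⟩ := hprod s2 hs2
          obtain ⟨w5, w6⟩ := hprod s3 hs3
          linarith
        · -- all new
          have hsum : s1 + s2 = s3 + s4 := by
            have h0 : d * (s1 + s2 - s3 - s4) = 0 := by linear_combination heq
            have := mul_eq_zero.mp h0
            rcases this with h | h
            · omega
            · omega
          rcases hSsidon s1 (Finset.mem_coe.mpr hs1) s2 (Finset.mem_coe.mpr hs2)
              s3 (Finset.mem_coe.mpr hs3) s4 (Finset.mem_coe.mpr hs4) hsum with
            ⟨h1, h2⟩ | ⟨h1, h2⟩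
          · exact Or.inl ⟨by rw [h1], by rw [h2]⟩
          · exact Or.inr ⟨by rw [h1], by rw [h2]⟩


lemma cover_step (F : Finset ℤ) (hF : IsSidon ↑F) (n : ℤ) :
    ∃ F' : Finset ℤ, F ⊆ F' ∧ IsSidon ↑F' ∧ ∃ a ∈ F', ∃ b ∈ F', a + b = n := by
  by_cases hrep : ∃ a ∈ F, ∃ b ∈ F, a + b = n
  · exact ⟨F, subset_rfl, hF, hrep⟩
  · set B : ℤ := (∑ a ∈ F, |a|) + |n| with hBdef
    have hB0 : 0 ≤ B := by positivity
    have hB : ∀ a ∈ F, -B ≤ a ∧ a ≤ B := by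
      intro a ha
      have h1 : |a| ≤ ∑ a ∈ F, |a| := Finset.single_le_sum (fun i _ => abs_nonneg i) ha
      have h2 : 0 ≤ |n| := abs_nonneg n
      have := abs_le.mp (le_trans h1 (by omega) : |a| ≤ B)
      exact this
    have hnB : -B ≤ n ∧ n ≤ B := by
      have h1 : (0:ℤ) ≤ ∑ a ∈ F, |a| := Finset.sum_nonneg (fun i _ => abs_nonneg i)
      have := abs_le.mp (le_trans (le_refl |n|) (by omega) : |n| ≤ B)
      exact this
    set C : ℤ := 5*B + 5 with hCdef
    refine ⟨insert C (insert (n - C) F), ?_, ?_, C, by simp, n - C, by simp, by ring⟩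
    · intro a ha; simp [ha]
    · intro a ha b hb c hc e he heq
      have ha' : a = C ∨ a = n - C ∨ a ∈ F := by simpa using ha
      have hb' : b = C ∨ b = n - C ∨ b ∈ F := by simpa using hb
      have hc' : c = C ∨ c = n - C ∨ c ∈ F := by simpa using hc
      have he' : e = C ∨ e = n - C ∨ e ∈ F := by simpa using he
      clear ha hb hc he
      rcases ha' with ha | ha | ha <;> rcases hb' with hb | hb | hb <;>
        rcases hc' with hc | hc | hc <;> rcases he' with he | he | he <;>
        first
        | (exact hF a ha b hb c hc e he heq)
        | (exfalso; apply hrep; exact ⟨a, ha, b, hb, by omega⟩)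
        | (exfalso; apply hrep; exact ⟨c, hc, e, he, by omega⟩)
        | ((try have Ha := hB a ha); (try have Hb := hB b hb);
           (try have Hc := hB c hc); (try have He := hB e he); omega)




lemma etf_injOn (p : ℕ) (hp : 0 < p) : Set.InjOn (etf p) ↑(Finset.range p) := by
  intro i _ j _ h
  rcases lt_trichotomy i j with hij | hij | hij
  · exact absurd h (ne_of_lt (etf_strictMono p hp hij))
  · exact hij
  · exact absurd h.symm (ne_of_lt (etf_strictMono p hp hij))

lemma block_step (ε : ℝ) (hε : 0 < ε) (F : Finset ℤ) (hF : IsSidon ↑F) (m : ℕ) :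
    ∃ F' : Finset ℤ, F ⊆ F' ∧ IsSidon ↑F' ∧ ∃ x : ℕ, m < x ∧
      (x:ℝ) ^ ((1:ℝ)/2 - ε) ≤ (countFn ↑F' (-(x:ℝ)) (x:ℝ) : ℝ) := by
  classical
  obtain ⟨B, hB0, hB⟩ : ∃ B : ℤ, 0 ≤ B ∧ ∀ a ∈ F, -B ≤ a ∧ a ≤ B :=
    ⟨∑ a ∈ F, |a|, Finset.sum_nonneg fun i _ => abs_nonneg i,
     fun a ha => abs_le.mp (Finset.single_le_sum (fun i _ => abs_nonneg i) ha)⟩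
  obtain ⟨d, hddef⟩ : ∃ d : ℤ, d = 2*B+1 := ⟨_, rfl⟩
  have hd0 : 0 < d := by omega
  obtain ⟨K, hKdef⟩ : ∃ K : ℝ, K = ((6*d + 2*B + 2 : ℤ) : ℝ) := ⟨_, rfl⟩
  have hK1 : (1:ℝ) ≤ K := by
    rw [hKdef]
    have : (1:ℤ) ≤ 6*d + 2*B + 2 := by omega
    exact_mod_cast this
  have htend : Filter.Tendsto (fun n : ℕ => (n:ℝ) ^ (2*ε)) Filter.atTop Filter.atTop :=
    (tendsto_rpow_atTop (by linarith)).comp tendsto_natCast_atTop_atTop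
  obtain ⟨p₀, hp₀⟩ := Filter.eventually_atTop.mp
    (htend.eventually_ge_atTop (K ^ ((1:ℝ)/2)))
  obtain ⟨p, hpge, hpprime⟩ := Nat.exists_infinite_primes (max p₀ (max (m+1) 3))
  have hp3 : 3 ≤ p := le_trans (le_max_of_le_right (le_max_right _ _)) hpge
  have hpm : m < p := lt_of_lt_of_le (Nat.lt_succ_self m)
    (le_trans (le_max_of_le_right (le_max_left _ _)) hpge)
  have hpp0 : p₀ ≤ p := le_trans (le_max_left _ _) hpge
  have hpne2 : p ≠ 2 := by omega
  have hp0 : 0 < p := by omega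
  have hpZ : (3:ℤ) ≤ (p:ℤ) := by exact_mod_cast hp3
  obtain ⟨sM, hsMdef⟩ : ∃ sM : ℤ, sM = 2*(p:ℤ)*(p:ℤ) := ⟨_, rfl⟩
  have hsM : 2 ≤ sM := by nlinarith
  obtain ⟨T, hTdef⟩ : ∃ T : ℤ, T = 2*(d*sM + B + 1) := ⟨_, rfl⟩
  obtain ⟨S, hSdef⟩ : ∃ S : Finset ℤ, S = (Finset.range p).image (etf p) := ⟨_, rfl⟩
  have hSb : ∀ s ∈ S, 0 ≤ s ∧ s ≤ sM - 1 := by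
    intro s hs
    rw [hSdef, Finset.mem_image] at hs
    obtain ⟨i, hi, rfl⟩ := hs
    rw [Finset.mem_range] at hi
    refine ⟨etf_nonneg p i hp0, ?_⟩
    have := etf_lt p i hp0 hi
    omega
  have hSsidon : IsSidon ↑S := by
    intro a ha b hb c hc e he heq
    rw [hSdef] at ha hb hc he
    simp only [Finset.coe_image, Finset.coe_range, Set.mem_image, Set.mem_Iio] at ha hb hc he
    obtain ⟨i, hi, rfl⟩ := ha
    obtain ⟨j, hj, rfl⟩ := hb
    obtain ⟨k, hk, rfl⟩ := hc
    obtain ⟨l, hl, rfl⟩ := he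
    rcases etf_sidon hpprime hpne2 hi hj hk hl heq with ⟨h1, h2⟩ | ⟨h1, h2⟩
    · exact Or.inl ⟨by rw [h1], by rw [h2]⟩
    · exact Or.inr ⟨by rw [h1], by rw [h2]⟩
  obtain ⟨blk, hblkdef⟩ : ∃ blk : Finset ℤ, blk = S.image (fun s => T + d * s) := ⟨_, rfl⟩
  have hinj : Function.Injective (fun s : ℤ => T + d * s) := by
    intro s t h
    simp only at h
    have h2 : d * s = d * t := by omega
    exact mul_left_cancel₀ hd0.ne' h2
  have hcard : blk.card = p := by
    rw [hblkdef, Finset.card_image_of_injective _ hinj, hSdef,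
      Finset.card_image_of_injOn (etf_injOn p hp0), Finset.card_range]
  refine ⟨F ∪ blk, Finset.subset_union_left, ?_, ?_⟩
  · rw [hblkdef]
    exact union_sidon F B d T sM hB hB0 hddef hsM hTdef S hSb hSsidon hF
  obtain ⟨xZ, hxZdef⟩ : ∃ xZ : ℤ, xZ = T + d * sM := ⟨_, rfl⟩
  have hdsM : 2*d ≤ d * sM :=
    by nlinarith [mul_nonneg hd0.le (by omega : (0:ℤ) ≤ sM - 2)]
  have hxZ1 : 1 ≤ xZ := by omega
  obtain ⟨x, hxcast⟩ : ∃ x : ℕ, (x:ℤ) = xZ := ⟨xZ.toNat, Int.toNat_of_nonneg (by omega)⟩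
  have hxR : ((x:ℕ):ℝ) = ((xZ:ℤ):ℝ) := by exact_mod_cast hxcast
  have hsMp : (p:ℤ) ≤ sM := by nlinarith
  have hdsM' : sM ≤ d * sM :=
    by nlinarith [mul_nonneg (by omega : (0:ℤ) ≤ d - 1) (by omega : (0:ℤ) ≤ sM)]
  have hpx : (p:ℤ) ≤ xZ := by linarith
  refine ⟨x, by omega, ?_⟩
  have hblkmem : ∀ a ∈ blk, 0 ≤ a ∧ a ≤ xZ := by
    intro a ha
    rw [hblkdef, Finset.mem_image] at ha
    obtain ⟨s, hs, rfl⟩ := ha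
    obtain ⟨h1, h2⟩ := hSb s hs
    have hds1 : 0 ≤ d * s := mul_nonneg hd0.le h1
    have hds2 : d * s ≤ d * (sM - 1) := mul_le_mul_of_nonneg_left h2 hd0.le
    have h3 : d * (sM - 1) = d * sM - d := by ring
    constructor
    · linarith
    · linarith
  have hcount : (p:ℕ) ≤ countFn ↑(F ∪ blk) (-(x:ℝ)) (x:ℝ) := by
    rw [countFn]
    have hsub : (↑blk : Set ℤ) ⊆
        {a : ℤ | a ∈ (↑(F ∪ blk) : Set ℤ) ∧ -(x:ℝ) ≤ (a:ℝ) ∧ (a:ℝ) ≤ (x:ℝ)} := by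
      intro a ha
      have ha' : a ∈ blk := ha
      obtain ⟨h1, h2⟩ := hblkmem a ha'
      refine ⟨by simp [Finset.mem_union, ha'], ?_, ?_⟩
      · have h0x : (0:ℝ) ≤ ((x:ℕ):ℝ) := Nat.cast_nonneg x
        have h1' : (0:ℝ) ≤ (a:ℝ) := by exact_mod_cast h1
        linarith
      · have h2' : ((a:ℤ):ℝ) ≤ ((xZ:ℤ):ℝ) := by exact_mod_cast h2
        rw [hxR]
        exact h2'
    have hfin : {a : ℤ | a ∈ (↑(F ∪ blk) : Set ℤ) ∧ -(x:ℝ) ≤ (a:ℝ) ∧ (a:ℝ) ≤ (x:ℝ)}.Finite :=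
      Set.Finite.subset (F ∪ blk).finite_toSet (fun a ha => ha.1)
    calc (p:ℕ) = blk.card := hcard.symm
      _ = (↑blk : Set ℤ).ncard := (Set.ncard_coe_finset blk).symm
      _ ≤ _ := Set.ncard_le_ncard hsub hfin
  have hpR : (0:ℝ) < (p:ℝ) := by positivity
  have hcountR : ((p:ℕ):ℝ) ≤ (countFn ↑(F ∪ blk) (-(x:ℝ)) (x:ℝ) : ℝ) := by
    exact_mod_cast hcount
  by_cases hcase : (1:ℝ)/2 - ε ≤ 0
  · have h1x : (1:ℝ) ≤ (x:ℝ) := by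
      have h1 : (1:ℤ) ≤ (x:ℤ) := by omega
      exact_mod_cast h1
    have h2 := Real.rpow_le_one_of_one_le_of_nonpos h1x hcase
    have hp1 : (1:ℝ) ≤ (p:ℝ) := by exact_mod_cast hp0
    linarith
  · push_neg at hcase
    have he0 : (0:ℝ) ≤ (1:ℝ)/2 - ε := hcase.le
    have hxK : ((x:ℕ):ℝ) ≤ K * (p:ℝ)^2 := by
      have hZ : xZ ≤ (6*d + 2*B + 2) * (p:ℤ)^2 := by
        have hds : d * sM = 2 * (d * (p:ℤ)^2) := by rw [hsMdef]; ring
        have hp2 : (1:ℤ) ≤ (p:ℤ)^2 := by nlinarith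
        have h2b : (2*B+2) * 1 ≤ (2*B+2) * (p:ℤ)^2 :=
          mul_le_mul_of_nonneg_left hp2 (by omega)
        have hrhs : (6*d + 2*B + 2) * (p:ℤ)^2 = 6*(d*(p:ℤ)^2) + (2*B+2)*(p:ℤ)^2 := by ring
        linarith
      rw [hxR, hKdef]
      have hZ' : ((xZ:ℤ):ℝ) ≤ (((6*d + 2*B + 2) * (p:ℤ)^2 : ℤ) : ℝ) := by exact_mod_cast hZ
      push_cast at hZ' ⊢
      linarith
    have hx0 : (0:ℝ) ≤ ((x:ℕ):ℝ) := Nat.cast_nonneg x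
    have hK0 : (0:ℝ) ≤ K := by linarith
    have step1 : ((x:ℕ):ℝ) ^ ((1:ℝ)/2 - ε) ≤ (K * (p:ℝ)^2) ^ ((1:ℝ)/2 - ε) :=
      Real.rpow_le_rpow hx0 hxK he0
    have step2 : (K * (p:ℝ)^2) ^ ((1:ℝ)/2 - ε)
        = K ^ ((1:ℝ)/2 - ε) * ((p:ℝ)^2) ^ ((1:ℝ)/2 - ε) :=
      Real.mul_rpow hK0 (by positivity)
    have step3 : ((p:ℝ)^2) ^ ((1:ℝ)/2 - ε) = (p:ℝ) ^ (2*((1:ℝ)/2 - ε)) := by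
      rw [← Real.rpow_natCast (p:ℝ) 2, ← Real.rpow_mul hpR.le]
      norm_num
    have step4 : K ^ ((1:ℝ)/2 - ε) ≤ K ^ ((1:ℝ)/2) :=
      Real.rpow_le_rpow_of_exponent_le hK1 (by linarith)
    have step5 : K ^ ((1:ℝ)/2) ≤ (p:ℝ) ^ (2*ε) := hp₀ p hpp0
    have step6 : (p:ℝ) ^ (2*ε) * (p:ℝ) ^ (2*((1:ℝ)/2 - ε)) = (p:ℝ) := by
      rw [← Real.rpow_add hpR]
      ring_nf
      exact Real.rpow_one _
    calc ((x:ℕ):ℝ) ^ ((1:ℝ)/2 - ε)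
        ≤ K ^ ((1:ℝ)/2 - ε) * ((p:ℝ)^2) ^ ((1:ℝ)/2 - ε) := by rw [← step2]; exact step1
      _ ≤ (p:ℝ) ^ (2*ε) * (p:ℝ) ^ (2*((1:ℝ)/2 - ε)) := by
          rw [step3]
          exact mul_le_mul (step4.trans step5) le_rfl (by positivity) (by positivity)
      _ = (p:ℝ) := step6
      _ ≤ _ := hcountR






lemma countFn_mono {A B : Set ℤ} (h : A ⊆ B) (y x : ℝ) :
    countFn A y x ≤ countFn B y x := by
  rw [countFn, countFn]
  apply Set.ncard_le_ncard
  · rintro a ⟨h1, h2⟩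
    exact ⟨h h1, h2⟩
  · apply Set.Finite.subset (Set.finite_Icc ⌈y⌉ ⌊x⌋)
    rintro a ⟨_, h2, h3⟩
    exact Set.mem_Icc.mpr ⟨Int.ceil_le.mpr h2, Int.le_floor.mpr h3⟩

lemma step_ex (ε : ℝ) (hε : 0 < ε) (F : Finset ℤ) (hF : IsSidon ↑F) (n : ℤ) (m : ℕ) :
    ∃ F' : Finset ℤ, F ⊆ F' ∧ IsSidon ↑F' ∧ (∃ a ∈ F', ∃ b ∈ F', a + b = n) ∧
      ∃ x : ℕ, m < x ∧ (x:ℝ) ^ ((1:ℝ)/2 - ε) ≤ (countFn ↑F' (-(x:ℝ)) (x:ℝ) : ℝ) := by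
  obtain ⟨F₁, h1, hS1, xx, hx1, hx2⟩ := block_step ε hε F hF m
  obtain ⟨F₂, h2, hS2, hcov⟩ := cover_step F₁ hS1 n
  refine ⟨F₂, h1.trans h2, hS2, hcov, xx, hx1, hx2.trans ?_⟩
  have := countFn_mono (Finset.coe_subset.mpr h2) (-(xx:ℝ)) (xx:ℝ)
  exact_mod_cast this

lemma sidon_empty : IsSidon ↑(∅ : Finset ℤ) := by
  intro a ha
  simp at ha

noncomputable def nextF (ε : ℝ) (hε : 0 < ε) (P : {F : Finset ℤ // IsSidon ↑F})
    (n : ℤ) (m : ℕ) : {F : Finset ℤ // IsSidon ↑F} :=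
  ⟨(step_ex ε hε P.1 P.2 n m).choose, (step_ex ε hε P.1 P.2 n m).choose_spec.2.1⟩

lemma nextF_sub (ε : ℝ) (hε : 0 < ε) (P : {F : Finset ℤ // IsSidon ↑F}) (n : ℤ) (m : ℕ) :
    P.1 ⊆ (nextF ε hε P n m).1 := (step_ex ε hε P.1 P.2 n m).choose_spec.1

lemma nextF_cov (ε : ℝ) (hε : 0 < ε) (P : {F : Finset ℤ // IsSidon ↑F}) (n : ℤ) (m : ℕ) :
    ∃ a ∈ (nextF ε hε P n m).1, ∃ b ∈ (nextF ε hε P n m).1, a + b = n :=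
  (step_ex ε hε P.1 P.2 n m).choose_spec.2.2.1

lemma nextF_cnt (ε : ℝ) (hε : 0 < ε) (P : {F : Finset ℤ // IsSidon ↑F}) (n : ℤ) (m : ℕ) :
    ∃ x : ℕ, m < x ∧
      (x:ℝ) ^ ((1:ℝ)/2 - ε) ≤ (countFn ↑(nextF ε hε P n m).1 (-(x:ℝ)) (x:ℝ) : ℝ) :=
  (step_ex ε hε P.1 P.2 n m).choose_spec.2.2.2

noncomputable def chain (ε : ℝ) (hε : 0 < ε) : ℕ → {F : Finset ℤ // IsSidon ↑F}
  | 0 => ⟨∅, sidon_empty⟩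
  | k+1 => nextF ε hε (chain ε hε k) (Denumerable.ofNat ℤ k) k

lemma chain_le (ε : ℝ) (hε : 0 < ε) {k l : ℕ} (h : k ≤ l) :
    (chain ε hε k).1 ⊆ (chain ε hε l).1 := by
  induction l with
  | zero => rw [Nat.le_zero.mp h]
  | succ l ih =>
    rcases Nat.lt_or_ge k (l+1) with h' | h'
    · exact (ih (by omega)).trans (by rw [chain]; exact nextF_sub ε hε _ _ _)
    · rw [Nat.le_antisymm h h']

theorem stmt_7 (ε : ℝ) (hε : 0 < ε) :
    ∃ A : Set ℤ, (∀ n : ℤ, repFn A n = 1) ∧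
      {x : ℕ | 0 < x ∧
        (x : ℝ) ^ ((1 : ℝ) / 2 - ε) ≤ (countFn A (-(x : ℝ)) (x : ℝ) : ℝ)}.Infinite := by
  classical
  refine ⟨⋃ k, ((chain ε hε k).1 : Set ℤ), ?_, ?_⟩
  case _ =>
    -- unique representation
    have hmem : ∀ a : ℤ, a ∈ (⋃ k, ((chain ε hε k).1 : Set ℤ)) ↔
        ∃ k, a ∈ (chain ε hε k).1 := by
      intro a
      simp [Set.mem_iUnion]
    have hSA : IsSidon (⋃ k, ((chain ε hε k).1 : Set ℤ)) := by
      intro a ha b hb c hc e he heq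
      obtain ⟨k1, h1⟩ := (hmem a).mp ha
      obtain ⟨k2, h2⟩ := (hmem b).mp hb
      obtain ⟨k3, h3⟩ := (hmem c).mp hc
      obtain ⟨k4, h4⟩ := (hmem e).mp he
      set M := max (max k1 k2) (max k3 k4) with hM
      have m1 : a ∈ (chain ε hε M).1 := chain_le ε hε (by omega) h1
      have m2 : b ∈ (chain ε hε M).1 := chain_le ε hε (by omega) h2
      have m3 : c ∈ (chain ε hε M).1 := chain_le ε hε (by omega) h3
      have m4 : e ∈ (chain ε hε M).1 := chain_le ε hε (by omega) h4
      exact (chain ε hε M).2 a m1 b m2 c m3 e m4 heq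
    have hcov : ∀ n : ℤ, ∃ a ∈ (⋃ k, ((chain ε hε k).1 : Set ℤ)),
        ∃ b ∈ (⋃ k, ((chain ε hε k).1 : Set ℤ)), a + b = n := by
      intro n
      set k := Encodable.encode n with hk
      obtain ⟨a, ha, b, hb, hab⟩ := nextF_cov ε hε (chain ε hε k) (Denumerable.ofNat ℤ k) k
      refine ⟨a, ?_, b, ?_, ?_⟩
      · exact (hmem a).mpr ⟨k+1, by rw [chain]; exact ha⟩
      · exact (hmem b).mpr ⟨k+1, by rw [chain]; exact hb⟩
      · rw [hab, hk, Denumerable.ofNat_encode]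
    intro n
    obtain ⟨a, ha, b, hb, hab⟩ := hcov n
    rw [repFn, Set.encard_eq_one]
    rcases le_total a b with h | h
    · refine ⟨(a, b), ?_⟩
      ext ⟨u, v⟩
      simp only [Set.mem_setOf_eq, Set.mem_singleton_iff, Prod.mk.injEq]
      constructor
      · rintro ⟨hu, hv, huv, hsum⟩
        rcases hSA u hu v hv a ha b hb (by omega) with ⟨h1, h2⟩ | ⟨h1, h2⟩
        · exact ⟨h1, h2⟩
        · constructor <;> omega
      · rintro ⟨rfl, rfl⟩
        exact ⟨ha, hb, h, hab⟩
    · refine ⟨(b, a), ?_⟩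
      ext ⟨u, v⟩
      simp only [Set.mem_setOf_eq, Set.mem_singleton_iff, Prod.mk.injEq]
      constructor
      · rintro ⟨hu, hv, huv, hsum⟩
        rcases hSA u hu v hv a ha b hb (by omega) with ⟨h1, h2⟩ | ⟨h1, h2⟩
        · constructor <;> omega
        · exact ⟨h1, h2⟩
      · rintro ⟨rfl, rfl⟩
        exact ⟨hb, ha, h, by omega⟩
  case _ =>
    -- infinitude
    have key : ∀ m : ℕ, ∃ x : ℕ, m < x ∧ 0 < x ∧
        (x : ℝ) ^ ((1 : ℝ) / 2 - ε) ≤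
          (countFn (⋃ k, ((chain ε hε k).1 : Set ℤ)) (-(x : ℝ)) (x : ℝ) : ℝ) := by
      intro m
      obtain ⟨x, hx1, hx2⟩ := nextF_cnt ε hε (chain ε hε m) (Denumerable.ofNat ℤ m) m
      refine ⟨x, hx1, by omega, hx2.trans ?_⟩
      have hsub : ((nextF ε hε (chain ε hε m) (Denumerable.ofNat ℤ m) m).1 : Set ℤ) ⊆
          ⋃ k, ((chain ε hε k).1 : Set ℤ) := by
        intro a ha
        refine Set.mem_iUnion.mpr ⟨m+1, ?_⟩
        rw [chain]
        exact ha
      have := countFn_mono hsub (-(x:ℝ)) (x:ℝ)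
      exact_mod_cast this
    by_contra hfin
    rw [Set.not_infinite] at hfin
    obtain ⟨M, hM⟩ := hfin.bddAbove
    obtain ⟨x, hx1, hx2, hx3⟩ := key M
    have hxmem : x ∈ {x : ℕ | 0 < x ∧
        (x : ℝ) ^ ((1 : ℝ) / 2 - ε) ≤
          (countFn (⋃ k, ((chain ε hε k).1 : Set ℤ)) (-(x : ℝ)) (x : ℝ) : ℝ)} := ⟨hx2, hx3⟩
    have := hM hxmem
    omega
end
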